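/- arXiv:2305.13907 — 2 statements merged into one kernel-verified Lean document; each statement's English description precedes it below -/
import Mathlib

section
/- On the invariant torus T = {(I,Φ) : I_1 = … = I_N = 1/2}, the Hamiltonian dynamics of H₀ restricts to the Kuramoto model: for every Φ ∈ ℝ^N and every k ∈ {1,…,N}, evaluating at I = (1/2,…,1/2) one has ∂H₀/∂I_k (I,Φ) = ω_k + (K/N) Σ_{j=1}^N A_{kj} sin(φ_j − φ_k), i.e. the angle equation φ̇_k = ∂H₀/∂I_k on T coincides with the right-hand side of the Kuramoto model (Eq. (5) of the paper). -/
open Real Finset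

/-- The embedding Hamiltonian `H₀(I,Φ) = Σᵢ ωᵢ Iᵢ − (K/N) Σᵢⱼ Aᵢⱼ √(Iᵢ Iⱼ)(Iⱼ − Iᵢ) sin(φⱼ − φᵢ)`
(Eq. (3) of the paper, sin version, for which the Hamiltonian equations (C1) hold). -/
noncomputable def H0 (N : ℕ) (A : Matrix (Fin N) (Fin N) ℝ) (K : ℝ) (ω : Fin N → ℝ)
    (I Φ : Fin N → ℝ) : ℝ :=
  ∑ i, ω i * I i -
    K / N * ∑ i, ∑ j, A i j * Real.sqrt (I i * I j) * (I j - I i) * Real.sin (Φ j - Φ i)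


/-! The curve `x ↦ update (fun _ => c) k x` moves only `I_k`. Each coupling term
`√(I_i I_j) (I_j - I_i)` has a factor vanishing on the torus `I ≡ c`, so there its derivative is
`c` times that of `I_j - I_i`. Summing, the contributions of row `k` and of column `k` coincide,
by symmetry of `A` and oddness of `sin`; at `c = 1/2` the resulting factor `2c` is `1`. -/

theorem HasDerivAt.sqrt_mul_mul_sub_of_eq {f g : ℝ → ℝ} {f' g' x : ℝ}
    (hf : HasDerivAt f f' x) (hg : HasDerivAt g g' x) (hfg : f x = g x) (hx : f x ≠ 0) :
    HasDerivAt (fun y => √(f y * g y) * (g y - f y)) (√(f x * g x) * (g' - f')) x := by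
  have hsqrt := (hf.fun_mul hg).sqrt (by rw [← hfg]; exact mul_self_ne_zero.mpr hx)
  exact (hsqrt.fun_mul (hg.fun_sub hf)).congr_deriv (by rw [hfg, sub_self, mul_zero, zero_add])

theorem Matrix.IsSymm.sum_sum_mul_single_sub_single_mul {ι : Type*} [Fintype ι] [DecidableEq ι]
    {A : Matrix ι ι ℝ} (hA : A.IsSymm) {B : ι → ι → ℝ} (hB : ∀ i j, B j i = -B i j) (k : ι) :
    ∑ i, ∑ j, A i j * ((Pi.single k 1 : ι → ℝ) j - (Pi.single k 1 : ι → ℝ) i) * B i j =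
      -2 * ∑ j, A k j * B k j := by
  have hcol : ∑ i, A i k * B i k = -∑ j, A k j * B k j := by
    rw [← sum_neg_distrib]
    exact sum_congr rfl fun i _ => by rw [hA.apply, hB, mul_neg]
  simp only [mul_sub, sub_mul, sum_sub_distrib, Pi.single_apply, mul_ite, ite_mul, mul_one,
    mul_zero, zero_mul, sum_ite_eq', mem_univ, if_true, ← ite_sum_zero, hcol]
  ring

theorem hasDerivAt_H0_update_const {N : ℕ} {A : Matrix (Fin N) (Fin N) ℝ} (hA : A.IsSymm)
    (K : ℝ) (ω Φ : Fin N → ℝ) (k : Fin N) {c : ℝ} (hc : 0 < c) :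
    HasDerivAt (fun x => H0 N A K ω (Function.update (fun _ => c) k x) Φ)
      (ω k + K / N * (2 * c * ∑ j, A k j * Real.sin (Φ j - Φ k))) c := by
  set γ := Function.update (fun _ : Fin N => c) k
  have hγ : ∀ i, HasDerivAt (fun x => γ x i) ((Pi.single k 1 : Fin N → ℝ) i) c :=
    hasDerivAt_pi.1 (hasDerivAt_update (fun _ => c) k c)
  have hγc : ∀ i, γ c i = c := fun i => by simp [γ]
  have hpair : ∀ i j, HasDerivAt
      (fun x => A i j * √(γ x i * γ x j) * (γ x j - γ x i) * Real.sin (Φ j - Φ i))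
      (A i j * ((Pi.single k 1 : Fin N → ℝ) j - (Pi.single k 1 : Fin N → ℝ) i) *
        (c * Real.sin (Φ j - Φ i))) c := by
    intro i j
    have hcoupling :=
      (hγ i).sqrt_mul_mul_sub_of_eq (hγ j) (by rw [hγc, hγc]) (by rw [hγc]; exact hc.ne')
    rw [hγc, hγc, Real.sqrt_mul_self hc.le] at hcoupling
    exact ((hcoupling.const_mul (A i j)).mul_const (Real.sin (Φ j - Φ i)) |>.congr_deriv
      (by ring)).congr_of_eventuallyEq
      (Filter.Eventually.of_forall fun x => by ring)
  have hlin := HasDerivAt.fun_sum fun i (_ : i ∈ univ) => (hγ i).const_mul (ω i)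
  have hquad := HasDerivAt.fun_sum fun i (_ : i ∈ univ) =>
    HasDerivAt.fun_sum fun j (_ : j ∈ univ) => hpair i j
  refine (hlin.sub (hquad.const_mul (K / N))).congr_deriv ?_
  rw [hA.sum_sum_mul_single_sub_single_mul (B := fun i j => c * Real.sin (Φ j - Φ i))
    (fun i j => by rw [← mul_neg, ← Real.sin_neg, neg_sub]) k]
  simp only [Pi.single_apply, mul_ite, mul_one, mul_zero, sum_ite_eq', mem_univ, if_true,
    mul_left_comm _ c, ← mul_sum]
  ring

theorem torus_dynamics_is_kuramoto_general (N : ℕ)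
    (A : Matrix (Fin N) (Fin N) ℝ) (hsym : A.IsSymm)
    (K : ℝ) (ω : Fin N → ℝ)
    (Φ : Fin N → ℝ) (k : Fin N) :
    HasDerivAt (fun x => H0 N A K ω (Function.update (fun _ => (1 : ℝ) / 2) k x) Φ)
      (ω k + K / N * ∑ j, A k j * Real.sin (Φ j - Φ k))
      ((1 : ℝ) / 2) := by
  simpa using hasDerivAt_H0_update_const hsym K ω Φ k (one_half_pos (α := ℝ))

/-- On the invariant torus `T = {I₁ = ⋯ = I_N = 1/2}` the Hamiltonian dynamics of `H₀`
restricts to the Kuramoto model: at `I = (1/2,…,1/2)`,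
`∂H₀/∂I_k (I,Φ) = ω_k + (K/N) Σⱼ A_{kj} sin(φ_j − φ_k)`. -/
theorem torus_dynamics_is_kuramoto (N : ℕ) (hN : 1 ≤ N)
    (A : Matrix (Fin N) (Fin N) ℝ) (hsym : A.IsSymm)
    (h01 : ∀ i j, A i j = 0 ∨ A i j = 1) (hdiag : ∀ i, A i i = 0)
    (K : ℝ) (hK : 0 < K) (ω : Fin N → ℝ)
    (Φ : Fin N → ℝ) (k : Fin N) :
    HasDerivAt (fun x => H0 N A K ω (Function.update (fun _ => (1 : ℝ) / 2) k x) Φ)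
      (ω k + K / N * ∑ j, A k j * Real.sin (Φ j - Φ k))
      ((1 : ℝ) / 2) :=
  torus_dynamics_is_kuramoto_general N A hsym K ω Φ k
end

section
/- The Kuramoto model embeds in the Hamiltonian system of H₀: if Φ : ℝ → ℝ^N is differentiable and solves the Kuramoto model dφ_k/dt = ω_k + (K/N) Σ_{j=1}^N A_{kj} sin(φ_j − φ_k) for all t ∈ ℝ and k ∈ {1,…,N}, then the curve t ↦ (I(t), Φ(t)) with constant action I(t) ≡ (1/2,…,1/2) solves Hamilton's equations dI_k/dt = −∂H₀/∂φ_k and dφ_k/dt = ∂H₀/∂I_k for all t ∈ ℝ and k ∈ {1,…,N}. -/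
open Real Finset

/-!
At a constant action `I ≡ a` every factor `Iⱼ − Iᵢ` of the coupling term vanishes, so `H₀` does not
depend on the angles there and the action stays constant. Differentiating in `I_k`, the vanishing
factor kills the derivative of `√(Iᵢ Iⱼ)`, leaving `|a| (δⱼₖ − δᵢₖ)` per pair `(i, j)`; by symmetry of
`A` the two resulting sums coincide, giving `∂H₀/∂I_k = ω_k + (K/N) · 2|a| · Σⱼ A_kj sin(φⱼ − φ_k)`,
which for `a = 1/2` is the Kuramoto vector field.
-/

theorem HasDerivAt.sqrt_mul_mul_sub {u v : ℝ → ℝ} {u' v' x : ℝ} (hu : HasDerivAt u u' x)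
    (hv : HasDerivAt v v' x) (huv : u x = v x) (hx : u x ≠ 0) :
    HasDerivAt (fun y => √(u y * v y) * (v y - u y)) (√(u x * v x) * (v' - u')) x := by
  have hsqrt := (hu.fun_mul hv).sqrt (by rw [← huv]; exact mul_self_ne_zero.2 hx)
  simpa [huv] using hsqrt.fun_mul (hv.fun_sub hu)

theorem Matrix.IsSymm.sum_sum_mul_single_sub_single_mul_sin {ι : Type*} [Fintype ι]
    [DecidableEq ι] {A : Matrix ι ι ℝ} (hA : A.IsSymm) (φ : ι → ℝ) (k : ι) :
    ∑ i, ∑ j, A i j * ((Pi.single k 1 : ι → ℝ) j - (Pi.single k 1 : ι → ℝ) i) * sin (φ j - φ i) =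
      -(2 * ∑ j, A k j * sin (φ j - φ k)) := by
  have hsin : ∀ i, sin (φ k - φ i) = -sin (φ i - φ k) := fun i => by rw [← sin_neg, neg_sub]
  simp [mul_sub, sub_mul, Pi.single_apply, Finset.sum_sub_distrib, hA.apply, hsin]
  ring

theorem H0_const_action (N : ℕ) (A : Matrix (Fin N) (Fin N) ℝ) (K : ℝ) (ω : Fin N → ℝ) (a : ℝ)
    (Φ : Fin N → ℝ) : H0 N A K ω (fun _ => a) Φ = ∑ i, ω i * a := by
  simp [H0]

theorem hasDerivAt_H0_update_const_action {N : ℕ} {A : Matrix (Fin N) (Fin N) ℝ}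
    (hA : A.IsSymm) (K : ℝ) (ω : Fin N → ℝ) {a : ℝ} (ha : a ≠ 0) (Φ : Fin N → ℝ) (k : Fin N) :
    HasDerivAt (fun x => H0 N A K ω (Function.update (fun _ => a) k x) Φ)
      (ω k + K / N * (2 * |a|) * ∑ j, A k j * sin (Φ j - Φ k)) a := by
  set I := Function.update (fun _ : Fin N => a) k
  have hI : ∀ i, HasDerivAt (fun x => I x i) ((Pi.single k 1 : Fin N → ℝ) i) a :=
    hasDerivAt_pi.1 (hasDerivAt_update _ k a)
  have hIa : ∀ i, I a i = a := fun i => by simp [I]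
  have hlinear : HasDerivAt (fun x => ∑ i, ω i * I x i) (ω k) a := by
    simpa [Pi.single_apply] using
      HasDerivAt.fun_sum fun i (_ : i ∈ univ) => (hI i).const_mul (ω i)
  have hpair : ∀ i j, HasDerivAt
      (fun x => A i j * √(I x i * I x j) * (I x j - I x i) * sin (Φ j - Φ i))
      (|a| * (A i j * ((Pi.single k 1 : Fin N → ℝ) j - (Pi.single k 1 : Fin N → ℝ) i) *
        sin (Φ j - Φ i))) a := fun i j => by
    have h := (((hI i).sqrt_mul_mul_sub (hI j) (by rw [hIa, hIa]) (by rw [hIa]; exact ha)).const_mul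
      (A i j)).mul_const (sin (Φ j - Φ i))
    rw [hIa, hIa, sqrt_mul_self_eq_abs] at h
    exact (h.congr_deriv (by ring)).congr_of_eventuallyEq (.of_forall fun x => by ring)
  have hcoupling : HasDerivAt
      (fun x => ∑ i, ∑ j, A i j * √(I x i * I x j) * (I x j - I x i) * sin (Φ j - Φ i))
      (|a| * -(2 * ∑ j, A k j * sin (Φ j - Φ k))) a := by
    rw [← hA.sum_sum_mul_single_sub_single_mul_sin]
    simp only [Finset.mul_sum]
    exact HasDerivAt.fun_sum fun i _ => HasDerivAt.fun_sum fun j _ => hpair i j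
  exact (hlinear.fun_sub (hcoupling.const_mul (K / N))).congr_deriv (by ring)

theorem kuramoto_embeds_in_hamiltonian_general (N : ℕ)
    (A : Matrix (Fin N) (Fin N) ℝ) (hsym : A.IsSymm)
    (K : ℝ) (ω : Fin N → ℝ)
    (Φ : ℝ → Fin N → ℝ)
    (hΦ : ∀ t k, HasDerivAt (fun s => Φ s k)
      (ω k + K / N * ∑ j, A k j * Real.sin (Φ t j - Φ t k)) t) :
    ∀ (t : ℝ) (k : Fin N),
      (∃ Dφ : ℝ,
        HasDerivAt (fun x => H0 N A K ω (fun _ => (1 : ℝ) / 2) (Function.update (Φ t) k x))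
          Dφ (Φ t k) ∧
        HasDerivAt (fun _ : ℝ => (1 : ℝ) / 2) (-Dφ) t) ∧
      (∃ DI : ℝ,
        HasDerivAt (fun x => H0 N A K ω (Function.update (fun _ => (1 : ℝ) / 2) k x) (Φ t))
          DI ((1 : ℝ) / 2) ∧
        HasDerivAt (fun s => Φ s k) DI t) := by
  intro t k
  refine ⟨⟨0, ?_, ?_⟩, ⟨_, ?_, hΦ t k⟩⟩
  · simp only [H0_const_action]
    exact hasDerivAt_const _ _
  · rw [neg_zero]
    exact hasDerivAt_const _ _
  · simpa [abs_of_pos] using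
      hasDerivAt_H0_update_const_action hsym K ω one_half_pos.ne' (Φ t) k

/-- The Kuramoto model embeds in the Hamiltonian system of `H₀`: if `Φ : ℝ → ℝ^N` solves the
Kuramoto model, then the curve `t ↦ (I(t), Φ(t))` with constant action `I(t) ≡ (1/2,…,1/2)`
solves Hamilton's equations `dI_k/dt = −∂H₀/∂φ_k` and `dφ_k/dt = ∂H₀/∂I_k`. -/
theorem kuramoto_embeds_in_hamiltonian (N : ℕ) (hN : 1 ≤ N)
    (A : Matrix (Fin N) (Fin N) ℝ) (hsym : A.IsSymm)
    (h01 : ∀ i j, A i j = 0 ∨ A i j = 1) (hdiag : ∀ i, A i i = 0)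
    (K : ℝ) (hK : 0 < K) (ω : Fin N → ℝ)
    (Φ : ℝ → Fin N → ℝ)
    (hΦ : ∀ t k, HasDerivAt (fun s => Φ s k)
      (ω k + K / N * ∑ j, A k j * Real.sin (Φ t j - Φ t k)) t) :
    ∀ (t : ℝ) (k : Fin N),
      (∃ Dφ : ℝ,
        HasDerivAt (fun x => H0 N A K ω (fun _ => (1 : ℝ) / 2) (Function.update (Φ t) k x))
          Dφ (Φ t k) ∧
        HasDerivAt (fun _ : ℝ => (1 : ℝ) / 2) (-Dφ) t) ∧
      (∃ DI : ℝ,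
        HasDerivAt (fun x => H0 N A K ω (Function.update (fun _ => (1 : ℝ) / 2) k x) (Φ t))
          DI ((1 : ℝ) / 2) ∧
        HasDerivAt (fun s => Φ s k) DI t) :=
  kuramoto_embeds_in_hamiltonian_general N A hsym K ω Φ hΦ
end
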